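/- The embedding commutes with substitution: for all terms M, N of Λ_{00a}, (⟨M⟩_a)[⟨N⟩_a/x] = ⟨M[N/x]⟩_a. -/

import Mathlib

namespace LLInf

/-- Node labels of preterms of the linear infinitary λ-calculus ℓΛ∞. -/
inductive Shape where
  | var (x : ℕ)
  | app
  | labs (x : ℕ)
  | iabs (x : ℕ)
  | cabs (x : ℕ)
  | ibox
  | cbox
deriving DecidableEq

/-- Preterms: possibly infinite trees, encoded by their (partial) position function. -/
def T : Type := List ℕ → Option Shape

def mk0 (s : Shape) : T := fun p => if p = [] then some s else none

def mk1 (s : Shape) (M : T) : T := fun p =>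
  match p with
  | [] => some s
  | 0 :: q => M q
  | _ => none

def mk2 (M N : T) : T := fun p =>
  match p with
  | [] => some Shape.app
  | 0 :: q => M q
  | 1 :: q => N q
  | _ => none

def child (M : T) (i : ℕ) : T := fun p => M (i :: p)

def bindsX (x : ℕ) : Option Shape → Bool
  | some (Shape.labs y) => y == x
  | some (Shape.iabs y) => y == x
  | some (Shape.cabs y) => y == x
  | _ => false

/-- Capture-avoiding (shadowing-respecting) substitution on positional preterms. -/
def substF (x : ℕ) (N : T) : T → List ℕ → Option Shape
  | M, [] => if M [] = some (Shape.var x) then N [] else M []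
  | M, i :: q =>
      if M [] = some (Shape.var x) then N (i :: q)
      else if bindsX x (M []) then M (i :: q)
      else substF x N (child M i) q
termination_by M p => p.length

def subst (x : ℕ) (N M : T) : T := fun p => substF x N M p

def FreeAt (x : ℕ) : T → List ℕ → Prop
  | M, [] => M [] = some (Shape.var x)
  | M, i :: q => bindsX x (M []) = false ∧ FreeAt x (child M i) q
termination_by M p => p.length

/-- `x` occurs free in `M`. -/
def Free (x : ℕ) (M : T) : Prop := ∃ p, FreeAt x M p

def arity : Shape → ℕ
  | Shape.var _ => 0
  | Shape.app => 2
  | _ => 1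

/-- The position function is a coherent (constructor-generated) tree. -/
def IsPre (M : T) : Prop :=
  (∃ s, M [] = some s) ∧
  (∀ p t, M p = some t → ∀ i, (∃ s, M (p ++ [i]) = some s) ↔ i < arity t) ∧
  (∀ p q, M p = none → M (p ++ q) = none)

/-- Basic reduction of ℓΛ∞. -/
inductive Basic : T → T → Prop
  | lin (x : ℕ) (M N : T) :
      Basic (mk2 (mk1 (Shape.labs x) M) N) (subst x N M)
  | ind (x : ℕ) (M N : T) :
      Basic (mk2 (mk1 (Shape.iabs x) M) (mk1 Shape.ibox N)) (subst x N M)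
  | coi (x : ℕ) (M N : T) :
      Basic (mk2 (mk1 (Shape.cabs x) M) (mk1 Shape.cbox N)) (subst x N M)

/-- One-step reduction, indexed by the level: the list of boxes crossed,
`false` for an inductive box, `true` for a coinductive box. -/
inductive Red : List Bool → T → T → Prop
  | base {M N} : Basic M N → Red [] M N
  | appL {s M N} (P) : Red s M N → Red s (mk2 M P) (mk2 N P)
  | appR {s M N} (P) : Red s M N → Red s (mk2 P M) (mk2 P N)
  | labs {s M N} (x) : Red s M N → Red s (mk1 (Shape.labs x) M) (mk1 (Shape.labs x) N)
  | iabs {s M N} (x) : Red s M N → Red s (mk1 (Shape.iabs x) M) (mk1 (Shape.iabs x) N)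
  | cabs {s M N} (x) : Red s M N → Red s (mk1 (Shape.cabs x) M) (mk1 (Shape.cabs x) N)
  | ibox {s M N} : Red s M N → Red (false :: s) (mk1 Shape.ibox M) (mk1 Shape.ibox N)
  | cbox {s M N} : Red s M N → Red (true :: s) (mk1 Shape.cbox M) (mk1 Shape.cbox N)

def Red' (M N : T) : Prop := ∃ s, Red s M N

/-- Reduction at depth `n`: at a level crossing exactly `n` coinductive boxes. -/
def RedAt (n : ℕ) (M N : T) : Prop := ∃ s, s.count true = n ∧ Red s M N

def Star : T → T → Prop := Relation.ReflTransGen Red'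

/-! ### Environments and well-formation for ℓΛ∞ -/

inductive Pat where
  | lin | ind | coi
deriving DecidableEq

def Env : Type := ℕ → Option Pat

def Env.upd (Γ : Env) (x : ℕ) (p : Option Pat) : Env :=
  fun y => if y = x then p else Γ y

def Env.union (Γ Δ : Env) : Env := fun y => (Γ y).orElse (fun _ => Δ y)

def NoLin (Γ : Env) : Prop := ∀ y, Γ y ≠ some Pat.lin

def OnlyLinAt (Γ : Env) (x : ℕ) : Prop :=
  Γ x = some Pat.lin ∧ ∀ y, y ≠ x → Γ y ≠ some Pat.lin

/-- Splitting of an environment: nonlinear entries are shared, linear ones split. -/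
def Split (Γ Γ₁ Γ₂ : Env) : Prop := ∀ y,
  (Γ₁ y = Γ y ∧ Γ₂ y = Γ y ∧ Γ y ≠ some Pat.lin) ∨
  (Γ y = some Pat.lin ∧
    ((Γ₁ y = some Pat.lin ∧ Γ₂ y = none) ∨ (Γ₂ y = some Pat.lin ∧ Γ₁ y = none)))

/-- The inductive rules of the mixed formal system of ℓΛ∞, with `R` the
judgments provided by the coinductive layer. -/
inductive WFStep (R : Env → T → Prop) : Env → T → Prop
  | base {Γ M} : R Γ M → WFStep R Γ M
  | vl {Γ} (x) : OnlyLinAt Γ x → WFStep R Γ (mk0 (Shape.var x))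
  | vi {Γ} (x) : NoLin Γ → Γ x = some Pat.ind → WFStep R Γ (mk0 (Shape.var x))
  | vc {Γ} (x) : NoLin Γ → Γ x = some Pat.coi → WFStep R Γ (mk0 (Shape.var x))
  | app {Γ Γ₁ Γ₂ M N} : Split Γ Γ₁ Γ₂ → WFStep R Γ₁ M → WFStep R Γ₂ N →
      WFStep R Γ (mk2 M N)
  | ll {Γ x M} : Γ x = none → WFStep R (Γ.upd x (some Pat.lin)) M →
      WFStep R Γ (mk1 (Shape.labs x) M)
  | li {Γ x M} : Γ x = none → WFStep R (Γ.upd x (some Pat.ind)) M →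
      WFStep R Γ (mk1 (Shape.iabs x) M)
  | lc {Γ x M} : Γ x = none → WFStep R (Γ.upd x (some Pat.coi)) M →
      WFStep R Γ (mk1 (Shape.cabs x) M)
  | mi {Γ M} : NoLin Γ → WFStep R Γ M → WFStep R Γ (mk1 Shape.ibox M)

/-- One application of the unique coinductive rule (mc). -/
def CoStep (S : Env → T → Prop) (Γ : Env) (M : T) : Prop :=
  NoLin Γ ∧ ∃ N, M = mk1 Shape.cbox N ∧ S Γ N

/-- Well-formation in ℓΛ∞: greatest fixed point of Ind ∘ Coind, presented via
consistent sets. -/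
def WF (Γ : Env) (M : T) : Prop :=
  ∃ S : Env → T → Prop, (∀ Δ N, S Δ N → WFStep (CoStep S) Δ N) ∧ S Γ M

/-! ### Infinitary reduction ⇒ and its auxiliary relation ⤳ -/

/-- One application of the coinductive ⇒-rule. `true` marks ⇒-judgments,
`false` marks ⤳-judgments. -/
def IRCo (S : Bool → T → T → Prop) (b : Bool) (M L : T) : Prop :=
  b = true ∧ ∃ N, Star M N ∧ S false N L

/-- The inductive ⤳-rules. -/
inductive IRInd (R : Bool → T → T → Prop) : Bool → T → T → Prop
  | base {b M N} : R b M N → IRInd R b M N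
  | varr (x) : IRInd R false (mk0 (Shape.var x)) (mk0 (Shape.var x))
  | app {M N P Q} : IRInd R false M N → IRInd R false P Q →
      IRInd R false (mk2 M P) (mk2 N Q)
  | labs {M N} (x) : IRInd R false M N →
      IRInd R false (mk1 (Shape.labs x) M) (mk1 (Shape.labs x) N)
  | iabs {M N} (x) : IRInd R false M N →
      IRInd R false (mk1 (Shape.iabs x) M) (mk1 (Shape.iabs x) N)
  | cabs {M N} (x) : IRInd R false M N →
      IRInd R false (mk1 (Shape.cabs x) M) (mk1 (Shape.cabs x) N)
  | ibox {M N} : IRInd R false M N →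
      IRInd R false (mk1 Shape.ibox M) (mk1 Shape.ibox N)
  | cbox {M N} : IRInd R true M N →
      IRInd R false (mk1 Shape.cbox M) (mk1 Shape.cbox N)

def IRSys (b : Bool) (M N : T) : Prop :=
  ∃ S : Bool → T → T → Prop,
    (∀ b' M' N', S b' M' N' → IRInd (IRCo S) b' M' N') ∧ S b M N

/-- Infinitary reduction M ⇒ N. -/
def Inf (M N : T) : Prop := IRSys true M N

/-- Auxiliary relation M ⤳ N. -/
def Next (M N : T) : Prop := IRSys false M N

def NormalForm (N : T) : Prop := ∀ s P, ¬ Red s N P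

end LLInf
namespace LLInf

/-! ### The infinitary λ-calculus Λ_{00a} and its Girard-style embedding -/

/-- Inductive rules for membership in Λ_{00a}: when `a = true` the argument
premise goes through the coinductive guard `S`. -/
inductive LamStep (a : Bool) (S : T → Prop) : T → Prop
  | var (x) : LamStep a S (mk0 (Shape.var x))
  | app0 {M N} : a = false → LamStep a S M → LamStep a S N → LamStep a S (mk2 M N)
  | app1 {M N} : a = true → LamStep a S M → S N → LamStep a S (mk2 M N)
  | lam {M} (x) : LamStep a S M → LamStep a S (mk1 (Shape.labs x) M)

/-- `M` is a term of Λ_{00a} (the depth increasing in argument position iff `a`). -/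
def Lam00 (a : Bool) (M : T) : Prop :=
  ∃ S : T → Prop, (∀ N, S N → LamStep a S N) ∧ S M

/-- The Girard-style embedding ⟨·⟩ₐ of Λ_{00a} into ℓΛ∞, positionally:
⟨x⟩ = x, ⟨MN⟩ = ⟨M⟩(◻ₐ⟨N⟩), ⟨λx.M⟩ = λ◻ₐx.⟨M⟩. -/
def embF (a : Bool) : T → List ℕ → Option Shape
  | M, [] =>
      match M [] with
      | some (Shape.var x) => some (Shape.var x)
      | some Shape.app => some Shape.app
      | some (Shape.labs x) => some (if a then Shape.cabs x else Shape.iabs x)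
      | _ => none
  | M, i :: q =>
      match M [] with
      | some Shape.app =>
          if i = 0 then embF a (child M 0) q
          else if i = 1 then
            match q with
            | [] => some (if a then Shape.cbox else Shape.ibox)
            | j :: r => if j = 0 then embF a (child M 1) r else none
          else none
      | some (Shape.labs _) => if i = 0 then embF a (child M 0) q else none
      | _ => none
termination_by M p => p.length
decreasing_by all_goals (simp [List.length_cons]; try omega)

def emb (a : Bool) (M : T) : T := fun p => embF a M p

/-- Reduction at depth `n` in Λ_{00a}: the depth increases only when entering
the second argument of an application, and only when `a = true`. -/
inductive LRed (a : Bool) : ℕ → T → T → Prop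
  | beta (x M N) : LRed a 0 (mk2 (mk1 (Shape.labs x) M) N) (subst x N M)
  | appL {n M N} (P) : LRed a n M N → LRed a n (mk2 M P) (mk2 N P)
  | lam {n M N} (x) : LRed a n M N →
      LRed a n (mk1 (Shape.labs x) M) (mk1 (Shape.labs x) N)
  | appR0 {n M N} (P) : a = false → LRed a n M N → LRed a n (mk2 P M) (mk2 P N)
  | appR1 {n M N} (P) : a = true → LRed a n M N → LRed a (n + 1) (mk2 P M) (mk2 P N)

/-- The environment ◻ₐ(FV(M)): every free variable of `M`, marked inductive
(a = false) or coinductive (a = true). -/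
noncomputable def envOf (a : Bool) (M : T) : Env := fun y =>
  @ite _ (Free y M) (Classical.dec _) (some (if a then Pat.coi else Pat.ind)) none

/-- The defining (guarded) equations of capture-avoiding substitution. -/
def SubstEqs (f : ℕ → T → T → T) : Prop :=
  ∀ x (N : T),
    f x N (mk0 (Shape.var x)) = N ∧
    (∀ y, y ≠ x → f x N (mk0 (Shape.var y)) = mk0 (Shape.var y)) ∧
    (∀ M P, f x N (mk2 M P) = mk2 (f x N M) (f x N P)) ∧
    (∀ y M, y ≠ x → f x N (mk1 (Shape.labs y) M) = mk1 (Shape.labs y) (f x N M)) ∧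
    (∀ M, f x N (mk1 (Shape.labs x) M) = mk1 (Shape.labs x) M) ∧
    (∀ y M, y ≠ x → f x N (mk1 (Shape.iabs y) M) = mk1 (Shape.iabs y) (f x N M)) ∧
    (∀ M, f x N (mk1 (Shape.iabs x) M) = mk1 (Shape.iabs x) M) ∧
    (∀ y M, y ≠ x → f x N (mk1 (Shape.cabs y) M) = mk1 (Shape.cabs y) (f x N M)) ∧
    (∀ M, f x N (mk1 (Shape.cabs x) M) = mk1 (Shape.cabs x) M) ∧
    (∀ M, f x N (mk1 Shape.ibox M) = mk1 Shape.ibox (f x N M)) ∧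
    (∀ M, f x N (mk1 Shape.cbox M) = mk1 Shape.cbox (f x N M))

end LLInf
namespace LLInf

/-! ### The calculus ℓΛ∞^{4S} -/

/-- Patterns of ℓΛ∞^{4S}: x, ↓x, !x, ↑x, #x. -/
inductive Pat4 where
  | lin | dm | im | cm | am
deriving DecidableEq

def Env4 : Type := ℕ → Option Pat4

def Env4.upd (Γ : Env4) (x : ℕ) (p : Option Pat4) : Env4 :=
  fun y => if y = x then p else Γ y

/-- Patterns shared between the premises of applications: ↓, ↑, #. -/
def Shared4 (p : Option Pat4) : Prop :=
  p = some Pat4.dm ∨ p = some Pat4.cm ∨ p = some Pat4.am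

/-- Environment containing only ↓, ↑, # patterns. -/
def Passive4 (Γ : Env4) : Prop := ∀ y, Γ y = none ∨ Shared4 (Γ y)

def Split4 (Γ Γ₁ Γ₂ : Env4) : Prop := ∀ y,
  (Shared4 (Γ y) ∧ Γ₁ y = Γ y ∧ Γ₂ y = Γ y) ∨
  (Γ y = none ∧ Γ₁ y = none ∧ Γ₂ y = none) ∨
  ((Γ y = some Pat4.lin ∨ Γ y = some Pat4.im) ∧
    ((Γ₁ y = Γ y ∧ Γ₂ y = none) ∨ (Γ₂ y = Γ y ∧ Γ₁ y = none)))

/-- Environment transformation of the (mi) rule: conclusion ↓Θ,!Ξ,↑Ψ,#Φ ⊢ !M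
from premise Ξ,↑Ψ,#Φ ⊢ M. -/
def MiEnv (Γ Γ' : Env4) : Prop := ∀ y,
  (Γ y = some Pat4.im ∧ Γ' y = some Pat4.lin) ∨
  (Γ y = some Pat4.cm ∧ Γ' y = some Pat4.cm) ∨
  (Γ y = some Pat4.am ∧ Γ' y = some Pat4.am) ∨
  (Γ y = some Pat4.dm ∧ Γ' y = none) ∨
  (Γ y = none ∧ Γ' y = none)

/-- Environment transformation of the coinductive (mc) rule: conclusion
↓Θ,↑Ξ,#Ψ ⊢ §M from premise #Ξ,#Ψ ⊢ M. -/
def McEnv (Γ Γ' : Env4) : Prop := ∀ y,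
  (Γ y = some Pat4.cm ∧ Γ' y = some Pat4.am) ∨
  (Γ y = some Pat4.am ∧ Γ' y = some Pat4.am) ∨
  (Γ y = some Pat4.dm ∧ Γ' y = none) ∨
  (Γ y = none ∧ Γ' y = none)

/-- The inductive well-formation rules of ℓΛ∞^{4S}. -/
inductive WF4Step (R : Env4 → T → Prop) : Env4 → T → Prop
  | base {Γ M} : R Γ M → WF4Step R Γ M
  | vl {Γ} (x) : Γ x = some Pat4.lin → Passive4 (Γ.upd x none) →
      WF4Step R Γ (mk0 (Shape.var x))
  | vd {Γ} (x) : Γ x = some Pat4.dm → Passive4 Γ → WF4Step R Γ (mk0 (Shape.var x))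
  | va {Γ} (x) : Γ x = some Pat4.am → Passive4 Γ → WF4Step R Γ (mk0 (Shape.var x))
  | app {Γ Γ₁ Γ₂ M N} : Split4 Γ Γ₁ Γ₂ → WF4Step R Γ₁ M → WF4Step R Γ₂ N →
      WF4Step R Γ (mk2 M N)
  | ll {Γ x M} : Γ x = none → WF4Step R (Γ.upd x (some Pat4.lin)) M →
      WF4Step R Γ (mk1 (Shape.labs x) M)
  | li1 {Γ x M} : Γ x = none → WF4Step R (Γ.upd x (some Pat4.dm)) M →
      WF4Step R Γ (mk1 (Shape.iabs x) M)
  | li2 {Γ x M} : Γ x = none → WF4Step R (Γ.upd x (some Pat4.im)) M →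
      WF4Step R Γ (mk1 (Shape.iabs x) M)
  | lc {Γ x M} : Γ x = none → WF4Step R (Γ.upd x (some Pat4.cm)) M →
      WF4Step R Γ (mk1 (Shape.cabs x) M)
  | mi {Γ Γ' M} : MiEnv Γ Γ' → WF4Step R Γ' M → WF4Step R Γ (mk1 Shape.ibox M)

/-- One application of the coinductive rule (mc) of ℓΛ∞^{4S}. -/
def CoStep4 (S : Env4 → T → Prop) (Γ : Env4) (M : T) : Prop :=
  ∃ Γ' N, McEnv Γ Γ' ∧ M = mk1 Shape.cbox N ∧ S Γ' N

/-- Well-formation in ℓΛ∞^{4S}. -/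
def WF4 (Γ : Env4) (M : T) : Prop :=
  ∃ S : Env4 → T → Prop, (∀ Δ N, S Δ N → WF4Step (CoStep4 S) Δ N) ∧ S Γ M

/-! ### Sizes, free occurrences, duplicability factors and weights -/

/-- The defining equations of the size |M|ₘ at depth m, as a relation. -/
inductive SizeRel : T → ℕ → ℕ → Prop
  | var0 (x) : SizeRel (mk0 (Shape.var x)) 0 1
  | ibox0 {M n} : SizeRel M 0 n → SizeRel (mk1 Shape.ibox M) 0 (n + 1)
  | cbox0 (M) : SizeRel (mk1 Shape.cbox M) 0 0
  | app0 {M N n p} : SizeRel M 0 n → SizeRel N 0 p →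
      SizeRel (mk2 M N) 0 (n + p + 1)
  | labs0 {M n} (x) : SizeRel M 0 n → SizeRel (mk1 (Shape.labs x) M) 0 (n + 1)
  | iabs0 {M n} (x) : SizeRel M 0 n → SizeRel (mk1 (Shape.iabs x) M) 0 (n + 1)
  | cabs0 {M n} (x) : SizeRel M 0 n → SizeRel (mk1 (Shape.cabs x) M) 0 (n + 1)
  | varS (x m) : SizeRel (mk0 (Shape.var x)) (m + 1) 0
  | iboxS {M m n} : SizeRel M (m + 1) n → SizeRel (mk1 Shape.ibox M) (m + 1) n
  | cboxS {M m n} : SizeRel M m n → SizeRel (mk1 Shape.cbox M) (m + 1) n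
  | appS {M N m n p} : SizeRel M (m + 1) n → SizeRel N (m + 1) p →
      SizeRel (mk2 M N) (m + 1) (n + p)
  | labsS {M m n} (x) : SizeRel M (m + 1) n → SizeRel (mk1 (Shape.labs x) M) (m + 1) n
  | iabsS {M m n} (x) : SizeRel M (m + 1) n → SizeRel (mk1 (Shape.iabs x) M) (m + 1) n
  | cabsS {M m n} (x) : SizeRel M (m + 1) n → SizeRel (mk1 (Shape.cabs x) M) (m + 1) n

/-- Number of free occurrences of `x`, as a relation. -/
inductive NFO (x : ℕ) : T → ℕ → Prop
  | varEq : NFO x (mk0 (Shape.var x)) 1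
  | varNe {y} : y ≠ x → NFO x (mk0 (Shape.var y)) 0
  | app {M N n p} : NFO x M n → NFO x N p → NFO x (mk2 M N) (n + p)
  | labsSh (M) : NFO x (mk1 (Shape.labs x) M) 0
  | labs {y M n} : y ≠ x → NFO x M n → NFO x (mk1 (Shape.labs y) M) n
  | iabsSh (M) : NFO x (mk1 (Shape.iabs x) M) 0
  | iabs {y M n} : y ≠ x → NFO x M n → NFO x (mk1 (Shape.iabs y) M) n
  | cabsSh (M) : NFO x (mk1 (Shape.cabs x) M) 0
  | cabs {y M n} : y ≠ x → NFO x M n → NFO x (mk1 (Shape.cabs y) M) n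
  | ibox {M n} : NFO x M n → NFO x (mk1 Shape.ibox M) n
  | cbox {M n} : NFO x M n → NFO x (mk1 Shape.cbox M) n
  | cboxNot {M} : ¬ Free x M → NFO x (mk1 Shape.cbox M) 0

/-- The defining equations of the duplicability factor Dₘ(M), as a relation. -/
inductive DRel : T → ℕ → ℕ → Prop
  | var0 (x) : DRel (mk0 (Shape.var x)) 0 1
  | ibox0 {M d} : DRel M 0 d → DRel (mk1 Shape.ibox M) 0 d
  | cbox0 (M) : DRel (mk1 Shape.cbox M) 0 1
  | app0 {M N d e} : DRel M 0 d → DRel N 0 e → DRel (mk2 M N) 0 (max d e)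
  | labs0 {M d} (x) : DRel M 0 d → DRel (mk1 (Shape.labs x) M) 0 d
  | cabs0 {M d} (x) : DRel M 0 d → DRel (mk1 (Shape.cabs x) M) 0 d
  | iabs0 {x M k d} : NFO x M k → DRel M 0 d →
      DRel (mk1 (Shape.iabs x) M) 0 (max k d)
  | varS (x m) : DRel (mk0 (Shape.var x)) (m + 1) 1
  | iboxS {M m d} : DRel M (m + 1) d → DRel (mk1 Shape.ibox M) (m + 1) d
  | cboxS {M m d} : DRel M m d → DRel (mk1 Shape.cbox M) (m + 1) d
  | appS {M N m d e} : DRel M (m + 1) d → DRel N (m + 1) e →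
      DRel (mk2 M N) (m + 1) (max d e)
  | labsS {M m d} (x) : DRel M (m + 1) d → DRel (mk1 (Shape.labs x) M) (m + 1) d
  | iabsS {M m d} (x) : DRel M (m + 1) d → DRel (mk1 (Shape.iabs x) M) (m + 1) d
  | cabsS {M m d} (x) : DRel M (m + 1) d → DRel (mk1 (Shape.cabs x) M) (m + 1) d

/-- The defining equations of the n-weight wⁿₘ(M), as a relation. -/
inductive WRel (n : ℕ) : T → ℕ → ℕ → Prop
  | var0 (x) : WRel n (mk0 (Shape.var x)) 0 1
  | ibox0 {M w} : WRel n M 0 w → WRel n (mk1 Shape.ibox M) 0 (n * w)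
  | cbox0 (M) : WRel n (mk1 Shape.cbox M) 0 0
  | app0 {M N w v} : WRel n M 0 w → WRel n N 0 v → WRel n (mk2 M N) 0 (w + v)
  | labs0 {M w} (x) : WRel n M 0 w → WRel n (mk1 (Shape.labs x) M) 0 (w + 1)
  | iabs0 {M w} (x) : WRel n M 0 w → WRel n (mk1 (Shape.iabs x) M) 0 (w + 1)
  | cabs0 {M w} (x) : WRel n M 0 w → WRel n (mk1 (Shape.cabs x) M) 0 (w + 1)
  | varS (x m) : WRel n (mk0 (Shape.var x)) (m + 1) 0
  | iboxS {M m w} : WRel n M (m + 1) w → WRel n (mk1 Shape.ibox M) (m + 1) w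
  | cboxS {M m w} : WRel n M m w → WRel n (mk1 Shape.cbox M) (m + 1) w
  | appS {M N m w v} : WRel n M (m + 1) w → WRel n N (m + 1) v →
      WRel n (mk2 M N) (m + 1) (w + v)
  | labsS {M m w} (x) : WRel n M (m + 1) w → WRel n (mk1 (Shape.labs x) M) (m + 1) w
  | iabsS {M m w} (x) : WRel n M (m + 1) w → WRel n (mk1 (Shape.iabs x) M) (m + 1) w
  | cabsS {M m w} (x) : WRel n M (m + 1) w → WRel n (mk1 (Shape.cabs x) M) (m + 1) w

/-- Wₘ(M) = w^{Dₘ(M)}ₘ(M): the weight of `M` at depth `m`. -/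
def TW (M : T) (m w : ℕ) : Prop := ∃ d, DRel M m d ∧ WRel d M m w

end LLInf

/-!
Both sides are possibly infinite trees, so they are compared through their finite
approximations: by induction on `n` they agree at every position of length `< n`. At a variable,
or at an abstraction binding `x`, the two sides are equal outright. At an application or at any
other abstraction both sides unfold to the same constructor over the corresponding sides for
the immediate subterms; the box `◻ₐ` inserted by `⟨·⟩ₐ` binds nothing, so substitution goes
through it with no effect beyond adding a level.
-/

namespace LLInf

def AgreeUpTo (n : ℕ) (A B : T) : Prop := ∀ p : List ℕ, p.length < n → A p = B p

theorem agreeUpTo_zero (A B : T) : AgreeUpTo 0 A B := fun _ h => absurd h (Nat.not_lt_zero _)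

theorem agreeUpTo_of_eq {n : ℕ} {A B : T} (h : A = B) : AgreeUpTo n A B := fun _ _ => h ▸ rfl

theorem AgreeUpTo.mono {m n : ℕ} {A B : T} (h : AgreeUpTo n A B) (hmn : m ≤ n) :
    AgreeUpTo m A B := fun p hp => h p (lt_of_lt_of_le hp hmn)

theorem agreeUpTo_mk1 {n : ℕ} (s : Shape) {A B : T} (h : AgreeUpTo n A B) :
    AgreeUpTo (n + 1) (mk1 s A) (mk1 s B) := by
  rintro (_ | ⟨_ | i, q⟩) hp
  · rfl
  · exact h q (by simpa using hp)
  · rfl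

theorem agreeUpTo_mk2 {n : ℕ} {A A' B B' : T} (hA : AgreeUpTo n A A') (hB : AgreeUpTo n B B') :
    AgreeUpTo (n + 1) (mk2 A B) (mk2 A' B') := by
  rintro (_ | ⟨_ | _ | i, q⟩) hp
  · rfl
  · exact hA q (by simpa using hp)
  · exact hB q (by simpa using hp)
  · rfl

@[simp] theorem child_mk1_zero (s : Shape) (A : T) : child (mk1 s A) 0 = A := rfl

@[simp] theorem child_mk2_zero (A B : T) : child (mk2 A B) 0 = A := rfl

@[simp] theorem child_mk2_one (A B : T) : child (mk2 A B) 1 = B := rfl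

theorem eq_of_forall_agreeUpTo {A B : T} (h : ∀ n, AgreeUpTo n A B) : A = B :=
  funext fun p => h (p.length + 1) p (Nat.lt_succ_self _)

section Subst

variable {x : ℕ} {N M : T}

theorem subst_apply_nil (x : ℕ) (N M : T) :
    subst x N M [] = if M [] = some (Shape.var x) then N [] else M [] := by
  rw [subst, substF]

theorem subst_apply_cons (x : ℕ) (N M : T) (i : ℕ) (q : List ℕ) :
    subst x N M (i :: q) =
      if M [] = some (Shape.var x) then N (i :: q)
      else if bindsX x (M []) then M (i :: q)
      else subst x N (child M i) q := by
  rw [subst, substF]; rfl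

theorem subst_apply_eq_none (x : ℕ) (N : T) (p : List ℕ) {M : T} (h : ∀ q, M q = none) :
    subst x N M p = none := by
  induction p generalizing M with
  | nil => simp [subst_apply_nil, h]
  | cons i q ih =>
    rw [subst_apply_cons, h]
    exact ih fun r => h (i :: r)

theorem subst_of_apply_nil_eq_var (h : M [] = some (Shape.var x)) : subst x N M = N := by
  funext p
  cases p <;> simp [subst_apply_nil, subst_apply_cons, h]

theorem subst_apply_nil_of_ne (h : M [] ≠ some (Shape.var x)) : subst x N M [] = M [] := by
  simp [subst_apply_nil, h]

theorem subst_of_bindsX (h : bindsX x (M []) = true) : subst x N M = M := by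
  have hne : M [] ≠ some (Shape.var x) := fun h' => by simp [h', bindsX] at h
  funext p
  cases p with
  | nil => exact subst_apply_nil_of_ne hne
  | cons i q => simp [subst_apply_cons, hne, h]

theorem child_subst (h : M [] ≠ some (Shape.var x)) (hb : bindsX x (M []) = false) (i : ℕ) :
    child (subst x N M) i = subst x N (child M i) := by
  funext q
  simp [child, subst_apply_cons, h, hb]

theorem subst_mk0_of_ne {y : ℕ} (hy : y ≠ x) :
    subst x N (mk0 (Shape.var y)) = mk0 (Shape.var y) := by
  funext p
  cases p with
  | nil => simp [subst_apply_nil, mk0, hy]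
  | cons i q =>
    simp only [subst_apply_cons, mk0, if_true, Option.some.injEq, Shape.var.injEq, hy, if_false,
      bindsX]
    exact subst_apply_eq_none x N q fun r => rfl

theorem subst_mk2 (x : ℕ) (N A B : T) :
    subst x N (mk2 A B) = mk2 (subst x N A) (subst x N B) := by
  funext p
  rcases p with _ | ⟨_ | _ | i, q⟩
  · simp [subst_apply_nil, mk2]
  · simp [subst_apply_cons, mk2, bindsX]
  · simp [subst_apply_cons, mk2, bindsX]
  · simp only [subst_apply_cons, mk2, reduceCtorEq, if_false, bindsX]
    exact subst_apply_eq_none x N q fun r => rfl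

theorem subst_mk1 {s : Shape} (hs : s ≠ Shape.var x) (hb : bindsX x (some s) = false) (A : T) :
    subst x N (mk1 s A) = mk1 s (subst x N A) := by
  funext p
  rcases p with _ | ⟨_ | i, q⟩
  · exact subst_apply_nil_of_ne (by simpa [mk1] using hs)
  · simp [subst_apply_cons, mk1, hs, hb]
  · simp only [subst_apply_cons, mk1, Option.some.injEq, hs, if_false, hb, Bool.false_eq_true]
    exact subst_apply_eq_none x N q fun r => rfl

end Subst

section Embedding

variable {a : Bool} {M : T}

theorem emb_apply_nil (a : Bool) (M : T) :
    emb a M [] = match M [] with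
      | some (Shape.var x) => some (Shape.var x)
      | some Shape.app => some Shape.app
      | some (Shape.labs x) => some (if a then Shape.cabs x else Shape.iabs x)
      | _ => none := by
  rw [emb, embF]

theorem emb_apply_cons (a : Bool) (M : T) (i : ℕ) (q : List ℕ) :
    emb a M (i :: q) = match M [] with
      | some Shape.app =>
          if i = 0 then emb a (child M 0) q
          else if i = 1 then
            match q with
            | [] => some (if a then Shape.cbox else Shape.ibox)
            | j :: r => if j = 0 then emb a (child M 1) r else none
          else none
      | some (Shape.labs _) => if i = 0 then emb a (child M 0) q else none
      | _ => none := by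
  cases q <;> rw [emb, embF] <;> rfl

theorem emb_of_apply_nil_eq_var {y : ℕ} (h : M [] = some (Shape.var y)) :
    emb a M = mk0 (Shape.var y) := by
  funext p
  cases p <;> simp [emb_apply_nil, emb_apply_cons, h, mk0]

theorem emb_of_apply_nil_eq_app (h : M [] = some Shape.app) :
    emb a M =
      mk2 (emb a (child M 0)) (mk1 (if a then Shape.cbox else Shape.ibox) (emb a (child M 1))) := by
  funext p
  rcases p with _ | ⟨_ | _ | i, _ | ⟨_ | j, r⟩⟩ <;>
    simp [emb_apply_nil, emb_apply_cons, h, mk1, mk2]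

theorem emb_of_apply_nil_eq_labs {y : ℕ} (h : M [] = some (Shape.labs y)) :
    emb a M = mk1 (if a then Shape.cabs y else Shape.iabs y) (emb a (child M 0)) := by
  funext p
  rcases p with _ | ⟨_ | i, q⟩ <;> simp [emb_apply_nil, emb_apply_cons, h, mk1]

theorem emb_apply_nil_congr {M' : T} (h : M [] = M' []) : emb a M [] = emb a M' [] := by
  simp only [emb_apply_nil, h]

theorem emb_apply_eq_none (h : emb a M [] = none) (p : List ℕ) : emb a M p = none := by
  rcases p with _ | ⟨i, q⟩
  · exact h
  · rw [emb_apply_nil] at h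
    rw [emb_apply_cons]
    rcases hM : M [] with _ | (_ | _ | _ | _ | _ | _ | _) <;> simp_all

end Embedding

section Commute

variable {a : Bool} {x : ℕ} {N M : T}

theorem subst_emb_of_emb_apply_nil_eq_none (h : emb a M [] = none) :
    subst x (emb a N) (emb a M) = emb a (subst x N M) := by
  have hM : M [] ≠ some (Shape.var x) := fun h' => by simp [emb_apply_nil, h'] at h
  have hS : emb a (subst x N M) [] = none :=
    (emb_apply_nil_congr (subst_apply_nil_of_ne hM)).trans h
  funext p
  rw [subst_apply_eq_none x _ p (emb_apply_eq_none h), emb_apply_eq_none hS]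

theorem subst_emb_of_apply_nil_eq_var {y : ℕ} (h : M [] = some (Shape.var y)) :
    subst x (emb a N) (emb a M) = emb a (subst x N M) := by
  rw [emb_of_apply_nil_eq_var h]
  by_cases hy : y = x
  · subst hy
    rw [subst_of_apply_nil_eq_var rfl, subst_of_apply_nil_eq_var h]
  · have hS : subst x N M [] = some (Shape.var y) :=
      (subst_apply_nil_of_ne (by simpa [h] using hy)).trans h
    rw [subst_mk0_of_ne hy, emb_of_apply_nil_eq_var hS]

theorem subst_emb_of_apply_nil_eq_labs_self (h : M [] = some (Shape.labs x)) :
    subst x (emb a N) (emb a M) = emb a (subst x N M) := by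
  rw [subst_of_bindsX (M := M) (by simp [h, bindsX]),
    subst_of_bindsX (by rw [emb_of_apply_nil_eq_labs h]; cases a <;> simp [mk1, bindsX])]

theorem subst_emb_agreeUpTo (a : Bool) (x : ℕ) (N : T) :
    ∀ n M, AgreeUpTo n (subst x (emb a N) (emb a M)) (emb a (subst x N M))
  | 0, _ => agreeUpTo_zero _ _
  | n + 1, M => by
    have ih := subst_emb_agreeUpTo a x N n
    rcases hM : M [] with _ | (y | _ | y | _ | _ | _ | _)
    case some.var => exact agreeUpTo_of_eq (subst_emb_of_apply_nil_eq_var hM)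
    case some.app =>
      have hne : M [] ≠ some (Shape.var x) := by simp [hM]
      have hb : bindsX x (M []) = false := by simp [hM, bindsX]
      rw [emb_of_apply_nil_eq_app hM, subst_mk2,
        subst_mk1 (by cases a <;> simp) (by cases a <;> simp [bindsX]),
        emb_of_apply_nil_eq_app ((subst_apply_nil_of_ne hne).trans hM), child_subst hne hb,
        child_subst hne hb]
      exact agreeUpTo_mk2 (ih _) ((agreeUpTo_mk1 _ (ih _)).mono n.le_succ)
    case some.labs =>
      by_cases hy : y = x
      · subst hy
        exact agreeUpTo_of_eq (subst_emb_of_apply_nil_eq_labs_self hM)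
      have hne : M [] ≠ some (Shape.var x) := by simp [hM]
      have hb : bindsX x (M []) = false := by simp [hM, bindsX, hy]
      rw [emb_of_apply_nil_eq_labs hM,
        subst_mk1 (by cases a <;> simp) (by cases a <;> simp [bindsX, hy]),
        emb_of_apply_nil_eq_labs ((subst_apply_nil_of_ne hne).trans hM), child_subst hne hb]
      exact agreeUpTo_mk1 _ (ih _)
    all_goals
      exact agreeUpTo_of_eq (subst_emb_of_emb_apply_nil_eq_none (by simp [emb_apply_nil, hM]))

end Commute

theorem embedding_subst_commute_general (a : Bool) (x : ℕ) (M N : T) :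
    subst x (emb a N) (emb a M) = emb a (subst x N M) :=
  eq_of_forall_agreeUpTo fun n => subst_emb_agreeUpTo a x N n M

/-- The embedding commutes with substitution:
(⟨M⟩ₐ)[⟨N⟩ₐ/x] = ⟨M[N/x]⟩ₐ. -/
theorem embedding_subst_commute (a : Bool) (x : ℕ) (M N : T)
    (hM : Lam00 a M) (hN : Lam00 a N) :
    subst x (emb a N) (emb a M) = emb a (subst x N M) :=
  embedding_subst_commute_general a x M N

end LLInf
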